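/- Structural characterisation (full theorem): let φ = C₁ ∧ ⋯ ∧ C_m (m ≥ 1) be a conjunctive normal form in which each clause C_i is a disjunction of at least one literal whose underlying atoms are pairwise distinct, and assume that whenever m ≥ 2 there exist an index j and a world w with w ⊨ C_j and w ⊭ φ (logical independence of the clauses; here for m = 1 the conjunction is just C₁). Then φ is atomic if and only if m = 1, i.e. if and only if φ is a single clause. -/

import Mathlib

/-- Propositional formulas over atoms `V`: `var v | ¬φ | φ ∧ φ | φ ∨ φ`. -/
inductive PropForm (V : Type*) where
  | var : V → PropForm V
  | not : PropForm V → PropForm V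
  | and : PropForm V → PropForm V → PropForm V
  | or  : PropForm V → PropForm V → PropForm V

namespace PropForm

variable {V : Type*}

/-- Boolean semantics: `w ⊨ φ`. -/
def eval (w : V → Bool) : PropForm V → Bool
  | var v => w v
  | not φ => !(eval w φ)
  | and φ ψ => eval w φ && eval w ψ
  | or φ ψ => eval w φ || eval w ψ

end PropForm

variable {V : Type*}

/-- `Content φ` : the finite set of worlds (valuations `V → Bool`) satisfying `φ`. -/
def Content [Fintype V] [DecidableEq V] (φ : PropForm V) : Finset (V → Bool) :=
  Finset.univ.filter fun w => φ.eval w = true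

/-- Information content `I(φ) = -log₂(|Content φ| / 2 ^ n)` in the extended reals,
with `I(φ) = +∞` when `Content φ = ∅`. -/
noncomputable def infoContent [Fintype V] [DecidableEq V] (φ : PropForm V) : EReal :=
  if (Content φ).card = 0 then ⊤
  else (((- Real.logb 2 (((Content φ).card : ℝ) / 2 ^ Fintype.card V)) : ℝ) : EReal)

/-- The disjunction `D 0 ∨ D 1 ∨ ⋯ ∨ D (k-1)` (left-associated), for `k ≥ 1`. -/
def bigOr {k : ℕ} (hk : 0 < k) (D : Fin k → PropForm V) : PropForm V :=
  ((List.ofFn D).tail).foldl PropForm.or (D ⟨0, hk⟩)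

/-- The conjunction `C 0 ∧ C 1 ∧ ⋯ ∧ C (m-1)` (left-associated), for `m ≥ 1`. -/
def bigAnd {m : ℕ} (hm : 0 < m) (C : Fin m → PropForm V) : PropForm V :=
  ((List.ofFn C).tail).foldl PropForm.and (C ⟨0, hm⟩)

/-- The disjunction `⋁_{i ∈ S} D i` over a nonempty finite index set `S`. -/
noncomputable def finsetOr {k : ℕ} (D : Fin k → PropForm V) (S : Finset (Fin k)) (hS : S.Nonempty) :
    PropForm V :=
  (((S.erase (S.min' hS)).toList).map D).foldl PropForm.or (D (S.min' hS))

/-- A literal: a positive or negated atom. -/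
inductive Literal (V : Type*) where
  | pos : V → Literal V
  | neg : V → Literal V

/-- The underlying atom of a literal. -/
def Literal.atom : Literal V → V
  | .pos v => v
  | .neg v => v

/-- The formula corresponding to a literal. -/
def Literal.toForm : Literal V → PropForm V
  | .pos v => .var v
  | .neg v => .not (.var v)

/-- `φ` is a literal formula: `var v` or `¬(var v)`. -/
inductive IsLiteral : PropForm V → Prop
  | var (v : V) : IsLiteral (.var v)
  | negVar (v : V) : IsLiteral (.not (.var v))

/-- `φ` is a clause: a finite disjunction of literals. -/
inductive IsClause : PropForm V → Prop
  | lit {φ : PropForm V} : IsLiteral φ → IsClause φ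
  | or {φ ψ : PropForm V} : IsClause φ → IsClause ψ → IsClause (φ.or ψ)

/-- Immediate (direct) subformula relation. -/
inductive DirectSubform : PropForm V → PropForm V → Prop
  | notArg (φ : PropForm V) : DirectSubform φ (.not φ)
  | andLeft (φ ψ : PropForm V) : DirectSubform φ (.and φ ψ)
  | andRight (φ ψ : PropForm V) : DirectSubform ψ (.and φ ψ)
  | orLeft (φ ψ : PropForm V) : DirectSubform φ (.or φ ψ)
  | orRight (φ ψ : PropForm V) : DirectSubform ψ (.or φ ψ)

/-- `ψ` is a strict subformula of `φ`. -/
def StrictSubform (ψ φ : PropForm V) : Prop := Relation.TransGen DirectSubform ψ φ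

/-- `φ` is atomic: it admits no safe cut, i.e. every strict subformula `ψ`
satisfies `I(ψ) ≥ I(φ)`. -/
def Atomic [Fintype V] [DecidableEq V] (φ : PropForm V) : Prop :=
  ∀ ψ : PropForm V, StrictSubform ψ φ → infoContent φ ≤ infoContent ψ

/-!
Information content is a strictly decreasing function of the number of models, so `φ` is
atomic exactly when no strict subformula has more models than `φ`. A strict subformula of a
clause is a subclause or the atom `v` of a literal `¬v`, and flipping `v` is a bijection between
the models of `v` and of `¬v`; so a clause is atomic. For `m ≥ 2` every clause is a strict
subformula of the conjunction, and independence gives one with strictly more models.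
-/

section Content

variable [Fintype V] [DecidableEq V]

lemma mem_content {φ : PropForm V} {w : V → Bool} : w ∈ Content φ ↔ φ.eval w = true := by
  simp [Content]

noncomputable def infoOfCount (n k : ℕ) : EReal :=
  if k = 0 then ⊤ else ((-Real.logb 2 ((k : ℝ) / 2 ^ n) : ℝ) : EReal)

lemma infoOfCount_strictAnti (n : ℕ) : StrictAnti (infoOfCount n) := by
  intro a b hab
  have hb : b ≠ 0 := by omega
  unfold infoOfCount
  rw [if_neg hb]
  split_ifs with ha
  · exact EReal.coe_lt_top _
  · rw [EReal.coe_lt_coe_iff, neg_lt_neg_iff]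
    exact Real.logb_lt_logb one_lt_two (by positivity) (by gcongr)

lemma infoContent_eq_infoOfCount (φ : PropForm V) :
    infoContent φ = infoOfCount (Fintype.card V) (Content φ).card := rfl

lemma infoContent_le_infoContent_iff {φ ψ : PropForm V} :
    infoContent φ ≤ infoContent ψ ↔ (Content ψ).card ≤ (Content φ).card := by
  simp only [infoContent_eq_infoOfCount, (infoOfCount_strictAnti _).le_iff_ge]

lemma not_atomic_of_content_ssubset {φ ψ : PropForm V} (hψ : StrictSubform ψ φ)
    (hss : Content φ ⊂ Content ψ) : ¬ Atomic φ := fun hφ =>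
  (Finset.card_lt_card hss).not_ge (infoContent_le_infoContent_iff.mp (hφ ψ hψ))

lemma content_subset_or_left (φ ψ : PropForm V) : Content φ ⊆ Content (φ.or ψ) := by
  intro w
  simp +contextual [mem_content, PropForm.eval]

lemma content_subset_or_right (φ ψ : PropForm V) : Content ψ ⊆ Content (φ.or ψ) := by
  intro w
  simp +contextual [mem_content, PropForm.eval]

lemma card_content_not_var (v : V) :
    (Content (.not (.var v))).card = (Content (.var v) : Finset (V → Bool)).card := by
  have flip_involutive : Function.Involutive fun w : V → Bool => Function.update w v !(w v) := by
    intro w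
    simp
  refine Finset.card_equiv flip_involutive.toPerm fun w => ?_
  simp [mem_content, PropForm.eval]

omit [Fintype V] [DecidableEq V] in
lemma not_strictSubform_var (ψ : PropForm V) (v : V) : ¬ StrictSubform ψ (.var v) := by
  rintro (⟨⟨⟩⟩ | ⟨_, ⟨⟩⟩)

lemma IsClause.card_content_le_of_strictSubform {φ ψ : PropForm V} (hφ : IsClause φ)
    (hψ : StrictSubform ψ φ) : (Content ψ).card ≤ (Content φ).card := by
  induction hφ generalizing ψ with
  | lit hl =>
    cases hl with
    | var v => exact absurd hψ (not_strictSubform_var ψ v)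
    | negVar v =>
      rcases hψ with ⟨⟨⟩⟩ | ⟨hψ, ⟨⟩⟩
      · exact (card_content_not_var v).ge
      · exact absurd hψ (not_strictSubform_var ψ v)
  | or _ _ ih₁ ih₂ =>
    rcases hψ with ⟨⟨⟩⟩ | ⟨hψ, ⟨⟩⟩
    · exact Finset.card_le_card (content_subset_or_left _ _)
    · exact Finset.card_le_card (content_subset_or_right _ _)
    · exact (ih₁ hψ).trans (Finset.card_le_card (content_subset_or_left _ _))
    · exact (ih₂ hψ).trans (Finset.card_le_card (content_subset_or_right _ _))

lemma IsClause.atomic {φ : PropForm V} (hφ : IsClause φ) : Atomic φ := fun _ hψ =>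
  infoContent_le_infoContent_iff.mpr (hφ.card_content_le_of_strictSubform hψ)

end Content

lemma Literal.isLiteral_toForm (l : Literal V) : IsLiteral l.toForm := by
  cases l
  · exact .var _
  · exact .negVar _

lemma isClause_foldl_or {a : PropForm V} {l : List (PropForm V)} (ha : IsClause a)
    (hl : ∀ b ∈ l, IsClause b) : IsClause (l.foldl .or a) := by
  induction l generalizing a with
  | nil => exact ha
  | cons b l ih =>
    exact ih (ha.or (hl b List.mem_cons_self)) fun c hc => hl c (List.mem_cons_of_mem _ hc)

lemma isClause_bigOr {k : ℕ} (hk : 0 < k) {D : Fin k → PropForm V} (hD : ∀ i, IsLiteral (D i)) :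
    IsClause (bigOr hk D) :=
  isClause_foldl_or (.lit (hD _)) fun _ hb =>
    let ⟨i, hi⟩ := List.mem_ofFn.mp (List.mem_of_mem_tail hb)
    hi ▸ .lit (hD i)

lemma eval_foldl_and (w : V → Bool) (a : PropForm V) (l : List (PropForm V)) :
    (l.foldl .and a).eval w = true ↔ ∀ c ∈ a :: l, c.eval w = true := by
  induction l generalizing a with
  | nil => simp
  | cons b l ih => simp [ih, PropForm.eval, and_assoc]

lemma strictSubform_foldl_and (a : PropForm V) {l : List (PropForm V)} (hl : l ≠ []) :
    ∀ c ∈ a :: l, StrictSubform c (l.foldl .and a) := by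
  induction l generalizing a with
  | nil => exact absurd rfl hl
  | cons b l ih =>
    have hab : ∀ c ∈ [a, b], StrictSubform c (a.and b) := by
      simpa using ⟨.single (.andLeft a b), .single (.andRight a b)⟩
    rw [List.foldl_cons]
    rcases eq_or_ne l [] with rfl | hne
    · exact hab
    · intro c hc
      obtain hc | hc : c ∈ [a, b] ∨ c ∈ l := by simpa [or_assoc] using hc
      · exact (hab c hc).trans (ih _ hne _ List.mem_cons_self)
      · exact ih _ hne c (List.mem_cons_of_mem _ hc)

section BigAnd

variable {m : ℕ} (hm : 0 < m) (C : Fin m → PropForm V)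

lemma List.cons_tail_ofFn : C ⟨0, hm⟩ :: (List.ofFn C).tail = List.ofFn C := by
  obtain ⟨m, rfl⟩ := Nat.exists_eq_add_one_of_ne_zero hm.ne'
  simp [List.ofFn_succ]

lemma eval_bigAnd (w : V → Bool) : (bigAnd hm C).eval w = true ↔ ∀ i, (C i).eval w = true := by
  simp [bigAnd, eval_foldl_and, List.cons_tail_ofFn]

lemma strictSubform_bigAnd (h2 : 2 ≤ m) (i : Fin m) : StrictSubform (C i) (bigAnd hm C) := by
  have htail : (List.ofFn C).tail ≠ [] := by
    obtain ⟨m, rfl⟩ := Nat.exists_eq_add_one_of_ne_zero hm.ne'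
    rw [List.ofFn_succ, List.tail_cons, Ne, List.ofFn_eq_nil_iff]
    omega
  exact strictSubform_foldl_and _ htail _ (by simp [List.cons_tail_ofFn])

lemma content_bigAnd_subset [Fintype V] [DecidableEq V] (i : Fin m) :
    Content (bigAnd hm C) ⊆ Content (C i) := fun _ hw =>
  mem_content.mpr ((eval_bigAnd hm C _).mp (mem_content.mp hw) i)

end BigAnd

lemma bigAnd_fin_one (hm : 0 < 1) (C : Fin 1 → PropForm V) : bigAnd hm C = C 0 := rfl

/-- Structural characterisation (full theorem): let
`φ = C 0 ∧ ⋯ ∧ C (m-1)` (`m ≥ 1`) be a CNF whose clauses are each a disjunction of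
at least one literal with pairwise distinct atoms, and assume that whenever `m ≥ 2`
some world satisfies one clause `C j` but not `φ` (logical independence).
Then `φ` is atomic if and only if `m = 1`, i.e. iff `φ` is a single clause. -/
theorem atomic_iff_single_clause {V : Type*} [Fintype V] [DecidableEq V] {m : ℕ}
    (hm : 0 < m) (C : Fin m → PropForm V)
    (hC : ∀ i, ∃ (k : ℕ) (hk : 0 < k) (L : Fin k → Literal V),
      (Function.Injective fun i => (L i).atom) ∧
        C i = bigOr hk fun i => (L i).toForm)
    (hind : 2 ≤ m → ∃ (j : Fin m) (w : V → Bool),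
      (C j).eval w = true ∧ (bigAnd hm C).eval w = false) :
    Atomic (bigAnd hm C) ↔ m = 1 := by
  constructor
  · intro hatomic
    by_contra hm1
    have h2 : 2 ≤ m := by omega
    obtain ⟨j, w, hCj, hφ⟩ := hind h2
    refine not_atomic_of_content_ssubset (strictSubform_bigAnd hm C h2 j) ?_ hatomic
    refine (Finset.ssubset_iff_of_subset (content_bigAnd_subset hm C j)).mpr ⟨w, ?_, ?_⟩
    · exact mem_content.mpr hCj
    · simp [mem_content, hφ]
  · rintro rfl
    obtain ⟨k, hk, L, -, hC0⟩ := hC 0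
    rw [bigAnd_fin_one, hC0]
    exact (isClause_bigOr hk fun i => (L i).isLiteral_toForm).atomic
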